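/- arXiv:2202.05777 — 5 statements merged into one kernel-verified Lean document; each statement's English description precedes it below -/
import Mathlib

section
/- Let d ≥ 3 be an integer and p ∈ (1/(d-1), 1) be real. Let φ ∈ (0,1) be the unique solution in (0,1) of φ = (pφ + 1 - p)^(d-1), and define χ = 1 - (pφ + 1 - p)^d and ψ = (1/2)·d·p·(1 - φ²). Then 2·(dp/2 - ψ) / (d·(1 - χ)) < 1/(d-1). -/
/-!
With `q = pφ + 1 - p`, the left-hand side collapses to `p q^(d-2)`, which is `f'(φ) / (d-1)` for
the offspring generating function `f(s) = (ps + 1 - p)^(d-1)`. Since `f` is strictly convex with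
fixed points `φ < 1` and `1`, its derivative at `φ` is below the secant slope `(f 1 - f φ)/(1 - φ) = 1`.
-/

theorem pow_deriv_lt_slope_to_one {m : ℕ} (hm : 2 ≤ m) {q : ℝ} (hq0 : 0 ≤ q) (hq1 : q < 1) :
    m * q ^ (m - 1) < (1 - q ^ m) / (1 - q) := by
  have h := (strictConvexOn_pow hm).lt_slope_of_hasDerivAt (Set.mem_Ici.2 hq0)
    (Set.mem_Ici.2 zero_le_one) hq1 (hasDerivAt_pow m q)
  rwa [slope_def_field, one_pow] at h

theorem binomial_pgf_deriv_lt_one_of_fixedPoint {m : ℕ} (hm : 2 ≤ m) {p φ : ℝ} (hp0 : 0 < p)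
    (hp1 : p ≤ 1) (hφ0 : 0 ≤ φ) (hφ1 : φ < 1) (hfix : φ = (p * φ + 1 - p) ^ m) :
    m * p * (p * φ + 1 - p) ^ (m - 1) < 1 := by
  have hslope := pow_deriv_lt_slope_to_one hm (q := p * φ + 1 - p) (by nlinarith) (by nlinarith)
  rw [← hfix, show 1 - (p * φ + 1 - p) = p * (1 - φ) by ring,
    div_mul_cancel_right₀ (sub_ne_zero.2 hφ1.ne') p] at hslope
  calc m * p * (p * φ + 1 - p) ^ (m - 1) = p * (m * (p * φ + 1 - p) ^ (m - 1)) := by ring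
    _ < p * p⁻¹ := by gcongr
    _ = 1 := mul_inv_cancel₀ hp0.ne'

/-- Subcriticality inequality for percolation on d-regular graphs after
removing the giant component. -/
theorem subcritical_after_giant (d : ℕ) (hd : 3 ≤ d) (p φ : ℝ)
    (hp : p ∈ Set.Ioo (1/((d:ℝ)-1)) 1) (hφ : φ ∈ Set.Ioo (0:ℝ) 1)
    (hfix : φ = (p*φ + 1 - p)^(d-1))
    (χ ψ : ℝ) (hχ : χ = 1 - (p*φ + 1 - p)^d)
    (hψ : ψ = (1/2)*(d:ℝ)*p*(1 - φ^2)) :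
    2*((d:ℝ)*p/2 - ψ) / ((d:ℝ)*(1 - χ)) < 1/((d:ℝ)-1) := by
  obtain ⟨hp_gt, hp_lt⟩ := hp
  have hd1 : (0 : ℝ) < d - 1 := by
    have : (3 : ℝ) ≤ d := by exact_mod_cast hd
    linarith
  have hp0 : 0 < p := (one_div_pos.2 hd1).trans hp_gt
  have hcrit := binomial_pgf_deriv_lt_one_of_fixedPoint (m := d - 1) (by omega) hp0 hp_lt.le
    hφ.1.le hφ.2 hfix
  obtain ⟨k, rfl⟩ : ∃ k, d = k + 2 := ⟨d - 2, by omega⟩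
  simp only [Nat.add_one_sub_one] at hfix hcrit
  set q := p * φ + 1 - p
  have hq0 : 0 < q := by nlinarith [hφ.1]
  have hratio : 2 * ((↑(k + 2) : ℝ) * p / 2 - ψ) / (↑(k + 2) * (1 - χ)) = p * q ^ k := by
    rw [hψ, hχ, hfix]
    field_simp
    ring
  rw [hratio, lt_div_iff₀ hd1]
  push_cast at hcrit ⊢
  linarith
end

section
/- Let q, d ≥ 3 be integers, β > 0 real, x ∈ (1/q, 1) satisfy x = (1+(e^β-1)x)^(d-1) / ((1+(e^β-1)x)^(d-1) + (q-1)·(1+(e^β-1)·(1-x)/(q-1))^(d-1)), and set t = (1+(e^β-1)x)/(1+(e^β-1)·(1-x)/(q-1)), r = (e^β-1)·x/(1+(e^β-1)·x). Then y = (1-x)/((q-1)·x) satisfies y = (1 - r + r·y)^(d-1). -/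
/-!
With `A = 1 + (e^β - 1) x` and `B = 1 + (e^β - 1)(1 - x)/(q - 1)`, the fixed-point equation
says exactly that `(1 - x)/((q - 1) x) = (B / A)^(d - 1)`, while `1 - r + r y` simplifies to `B / A`.
-/

section Field

variable {K : Type*} [Field K]

theorem div_mul_eq_div_of_eq_div_add {x a b c : K} (hx : x ≠ 0) (hc : c ≠ 0) (ha : a ≠ 0)
    (h : x = a / (a + c * b)) : (1 - x) / (c * x) = b / a := by
  have hs : a + c * b ≠ 0 := fun hs => hx (by rw [h, hs, div_zero])
  rw [div_eq_div_iff (mul_ne_zero hc hx) ha, h]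
  field_simp
  ring

theorem one_sub_add_mul_div_mul_eq_div {E x c : K} (hx : x ≠ 0) (hc : c ≠ 0)
    (hA : 1 + E * x ≠ 0) :
    1 - E * x / (1 + E * x) + E * x / (1 + E * x) * ((1 - x) / (c * x)) =
      (1 + E * (1 - x) / c) / (1 + E * x) := by
  field_simp
  ring

end Field

theorem one_add_exp_sub_one_mul_pos (β : ℝ) {x : ℝ} (hx₀ : 0 ≤ x) (hx₁ : x ≤ 1) :
    0 < 1 + (Real.exp β - 1) * x := by
  have : 1 + (Real.exp β - 1) * x = (1 - x) + Real.exp β * x := by ring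
  rw [this]
  nlinarith [Real.exp_pos β, mul_nonneg hx₀ (Real.exp_pos β).le]

theorem extinction_prob_formula_general (q d : ℕ) (hq : 3 ≤ q)
    (β x : ℝ) (hx : x ∈ Set.Ioo (1/(q:ℝ)) 1)
    (hfix : x = (1+(Real.exp β-1)*x)^(d-1) /
      ((1+(Real.exp β-1)*x)^(d-1)
        + ((q:ℝ)-1)*(1+(Real.exp β-1)*(1-x)/((q:ℝ)-1))^(d-1)))
    (r : ℝ)
    (hr : r = (Real.exp β-1)*x/(1+(Real.exp β-1)*x)) :
    (1-x)/(((q:ℝ)-1)*x) = (1 - r + r*((1-x)/(((q:ℝ)-1)*x)))^(d-1) := by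
  obtain ⟨hx₁, hx₂⟩ := hx
  have hq₁ : (q:ℝ) - 1 ≠ 0 := by
    have : (3:ℝ) ≤ q := by exact_mod_cast hq
    linarith
  have hx₀ : 0 < x := lt_of_le_of_lt (by positivity) hx₁
  have hA := one_add_exp_sub_one_mul_pos β hx₀.le hx₂.le
  rw [hr, one_sub_add_mul_div_mul_eq_div hx₀.ne' hq₁ hA.ne', div_pow]
  exact div_mul_eq_div_of_eq_div_add hx₀.ne' hq₁ (pow_pos hA _).ne' hfix

/-- The value y = (1-x)/((q-1)x) is a fixed point of y = (1-r+ry)^(d-1) where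
r is the effective percolation parameter of the dominant colour class. -/
theorem extinction_prob_formula (q d : ℕ) (hq : 3 ≤ q) (hd : 3 ≤ d)
    (β x : ℝ) (hβ : 0 < β) (hx : x ∈ Set.Ioo (1/(q:ℝ)) 1)
    (hfix : x = (1+(Real.exp β-1)*x)^(d-1) /
      ((1+(Real.exp β-1)*x)^(d-1)
        + ((q:ℝ)-1)*(1+(Real.exp β-1)*(1-x)/((q:ℝ)-1))^(d-1)))
    (t r : ℝ)
    (ht : t = (1+(Real.exp β-1)*x)/(1+(Real.exp β-1)*(1-x)/((q:ℝ)-1)))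
    (hr : r = (Real.exp β-1)*x/(1+(Real.exp β-1)*x)) :
    (1-x)/(((q:ℝ)-1)*x) = (1 - r + r*((1-x)/(((q:ℝ)-1)*x)))^(d-1) :=
  extinction_prob_formula_general q d hq β x hx hfix r hr
end

section
/- Let q, d ≥ 3 be integers, β > 0 real, and x ∈ (1/q, 1) satisfy the ferromagnetic BP fixed-point equation as above with t = (1+(e^β-1)x)/(1+(e^β-1)·(1-x)/(q-1)). Define ν(1) = t^d/(t^d + q - 1), r = (e^β-1)x/(1+(e^β-1)x), φ = (1-x)/((q-1)x), and χ = 1 - (1 - r + r·φ)^d. Then χ = (q·ν(1) - 1)/((q-1)·ν(1)), equivalently 1 - q·(1-ν(1))/(q-1) = χ·ν(1). -/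
/-! With `a = 1 + w x` and `b = 1 + w (1 - x)/(q - 1)`, where `w = e^β - 1`, one has `t = a / b`,
and the base of the power defining `χ` collapses to `1 - r + r φ = b / a = t⁻¹`. Hence
`χ = 1 - T⁻¹` and `ν(1) = T / (T + q - 1)` with `T = t^d`, and both identities become rational
identities in `T` and `q`. -/

theorem one_add_mul_pos_of_neg_one_lt {w s : ℝ} (hw : -1 < w) (hs₀ : 0 ≤ s) (hs₁ : s ≤ 1) :
    0 < 1 + w * s := by
  have hw' : 0 < 1 + w := by linarith
  rcases hs₁.lt_or_eq with hs₁ | rfl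
  · nlinarith [mul_nonneg hw'.le hs₀]
  · simpa using hw'

theorem one_sub_add_mul_eq_div {K : Type*} [Field K] {w x c : K} (hx : x ≠ 0) (hc : c ≠ 0)
    (ha : 1 + w * x ≠ 0) :
    1 - w * x / (1 + w * x) + w * x / (1 + w * x) * ((1 - x) / (c * x)) =
      (1 + w * (1 - x) / c) / (1 + w * x) := by
  field_simp
  ring

section RationalIdentities

variable {K : Type*} [Field K] {q T : K}

theorem one_sub_inv_eq_div_of_eq_div (hT : T ≠ 0) (hq : q - 1 ≠ 0) (hTq : T + q - 1 ≠ 0) :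
    1 - T⁻¹ = (q * (T / (T + q - 1)) - 1) / ((q - 1) * (T / (T + q - 1))) := by
  field_simp
  ring

theorem one_sub_div_eq_one_sub_inv_mul (hT : T ≠ 0) (hq : q - 1 ≠ 0) (hTq : T + q - 1 ≠ 0) :
    1 - q * (1 - T / (T + q - 1)) / (q - 1) = (1 - T⁻¹) * (T / (T + q - 1)) := by
  field_simp
  ring

end RationalIdentities

theorem giant_density_identity_general (q d : ℕ) (hq : 3 ≤ q)
    (β x : ℝ) (hx : x ∈ Set.Ioo (1/(q:ℝ)) 1)
    (t ν1 r φ χ : ℝ)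
    (ht : t = (1+(Real.exp β-1)*x)/(1+(Real.exp β-1)*(1-x)/((q:ℝ)-1)))
    (hν1 : ν1 = t^d/(t^d + (q:ℝ) - 1))
    (hr : r = (Real.exp β-1)*x/(1+(Real.exp β-1)*x))
    (hφ : φ = (1-x)/(((q:ℝ)-1)*x))
    (hχ : χ = 1 - (1 - r + r*φ)^d) :
    χ = ((q:ℝ)*ν1 - 1)/(((q:ℝ)-1)*ν1) ∧
    1 - (q:ℝ)*(1-ν1)/((q:ℝ)-1) = χ*ν1 := by
  obtain ⟨hx_gt, hx_lt⟩ := hx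
  have hq₁ : (2:ℝ) ≤ (q:ℝ) - 1 := by
    have : (3:ℝ) ≤ q := by exact_mod_cast hq
    linarith
  have hx₀ : 0 < x := lt_trans (by positivity) hx_gt
  have hw : -1 < Real.exp β - 1 := by linarith [Real.exp_pos β]
  have ha : 0 < 1 + (Real.exp β - 1) * x :=
    one_add_mul_pos_of_neg_one_lt hw hx₀.le hx_lt.le
  have hb : 0 < 1 + (Real.exp β - 1) * (1 - x) / ((q:ℝ) - 1) := by
    rw [mul_div_assoc]
    refine one_add_mul_pos_of_neg_one_lt hw (by positivity) ?_
    rw [div_le_one (by positivity)]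
    linarith
  have hT : 0 < t ^ d := pow_pos (ht ▸ div_pos ha hb) d
  have hχT : χ = 1 - (t ^ d)⁻¹ := by
    rw [hχ, hr, hφ, one_sub_add_mul_eq_div hx₀.ne' (by positivity) ha.ne', ht, ← inv_div, inv_pow]
  have hq₀ : (q:ℝ) - 1 ≠ 0 := by positivity
  have hTq : t ^ d + (q:ℝ) - 1 ≠ 0 := (by linarith : (0:ℝ) < t ^ d + q - 1).ne'
  subst hχT hν1
  exact ⟨one_sub_inv_eq_div_of_eq_div hT.ne' hq₀ hTq,
    one_sub_div_eq_one_sub_inv_mul hT.ne' hq₀ hTq⟩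

/-- The density χ of the giant cluster within the dominant colour class
matches the ferromagnetic marginal ν(1). -/
theorem giant_density_identity (q d : ℕ) (hq : 3 ≤ q) (hd : 3 ≤ d)
    (β x : ℝ) (hβ : 0 < β) (hx : x ∈ Set.Ioo (1/(q:ℝ)) 1)
    (hfix : x = (1+(Real.exp β-1)*x)^(d-1) /
      ((1+(Real.exp β-1)*x)^(d-1)
        + ((q:ℝ)-1)*(1+(Real.exp β-1)*(1-x)/((q:ℝ)-1))^(d-1)))
    (t ν1 r φ χ : ℝ)
    (ht : t = (1+(Real.exp β-1)*x)/(1+(Real.exp β-1)*(1-x)/((q:ℝ)-1)))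
    (hν1 : ν1 = t^d/(t^d + (q:ℝ) - 1))
    (hr : r = (Real.exp β-1)*x/(1+(Real.exp β-1)*x))
    (hφ : φ = (1-x)/(((q:ℝ)-1)*x))
    (hχ : χ = 1 - (1 - r + r*φ)^d) :
    χ = ((q:ℝ)*ν1 - 1)/(((q:ℝ)-1)*ν1) ∧
    1 - (q:ℝ)*(1-ν1)/((q:ℝ)-1) = χ*ν1 :=
  giant_density_identity_general q d hq β x hx t ν1 r φ χ ht hν1 hr hφ hχ
end

section
/- Let q, d ≥ 3, β > 0, and let x ∈ (1/q, 1) satisfy the ferromagnetic BP fixed-point equation. Then (e^β - 1)·x > 1/(d-2). Equivalently, with t = (1+(e^β-1)x)/(1+(e^β-1)(1-x)/(q-1)) > 1 and e^β - 1 = (t-1)(t^(d-1)+q-1)/(t^(d-1)-t), x = t^(d-1)/(t^(d-1)+q-1), the product (e^β-1)·x = (t-1)·t^(d-1)/(t^(d-1)-t) exceeds 1/(d-2). -/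
/-!
Put `a = 1 + (e^β - 1) x` and `b = 1 + (e^β - 1)(1 - x)/(q - 1)`, so that `a / b` is the `t` of the
informal statement. The fixed-point equation says `(a - 1) b^(d-1) = (b - 1) a^(d-1)`, and `x > 1/q`
says `b < a`. Subtracting `(a - 1) a^(d-2) b` from both sides turns the identity into
`(a - 1)(a^(d-2) - b^(d-2)) b = a^(d-2) (a - b)`, and the geometric-sum bound
`a^(d-2) - b^(d-2) ≤ (d - 2) a^(d-3) (a - b)` together with `b < a` then forces `(d - 2)(a - 1) > 1`.
-/

open Finset

section OrderedField

variable {K : Type*} [Field K] [LinearOrder K] [IsStrictOrderedRing K]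

theorem pow_sub_pow_le_mul_pow_mul_sub {a b : K} (hb : 0 ≤ b) (hba : b ≤ a) (n : ℕ) :
    a ^ n - b ^ n ≤ n * a ^ (n - 1) * (a - b) := by
  have ha : 0 ≤ a := hb.trans hba
  have hab : 0 ≤ a - b := sub_nonneg.2 hba
  rw [← geom_sum₂_mul, ← geom_sum₂_self]
  gcongr

theorem one_lt_mul_sub_one_of_sub_one_mul_pow_eq {a b : K} (hb : 0 < b) (hba : b < a) (n : ℕ)
    (h : (a - 1) * b ^ (n + 2) = (b - 1) * a ^ (n + 2)) : 1 < (n + 1) * (a - 1) := by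
  have hpos : 0 < a ^ (n + 1) * (a - b) := mul_pos (pow_pos (hb.trans hba) _) (sub_pos.2 hba)
  have hpow : 0 < a ^ (n + 1) - b ^ (n + 1) :=
    sub_pos.2 (pow_lt_pow_left₀ hba hb.le n.succ_ne_zero)
  have hid : (a - 1) * ((a ^ (n + 1) - b ^ (n + 1)) * b) = a ^ (n + 1) * (a - b) := by
    linear_combination (-1 : K) * h
  have ha : 1 < a := by
    have := hid ▸ hpos
    linarith [pos_of_mul_pos_left this (mul_pos hpow hb).le]
  have hbound := pow_sub_pow_le_mul_pow_mul_sub hb.le hba.le (n + 1)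
  push_cast at hbound
  have : a ^ (n + 1) * (a - b) < (n + 1) * (a - 1) * (a ^ (n + 1) * (a - b)) :=
    calc a ^ (n + 1) * (a - b) = (a - 1) * ((a ^ (n + 1) - b ^ (n + 1)) * b) := hid.symm
      _ < (a - 1) * ((a ^ (n + 1) - b ^ (n + 1)) * a) := by gcongr
      _ ≤ (a - 1) * ((n + 1) * a ^ n * (a - b) * a) := by gcongr
      _ = (n + 1) * (a - 1) * (a ^ (n + 1) * (a - b)) := by ring
  exact (lt_mul_iff_one_lt_left hpos).1 this

theorem mul_pow_eq_mul_pow_of_eq_div {E x r : K} (n : ℕ) (hr : r ≠ 0)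
    (hD : (1 + E * x) ^ n + r * (1 + E * (1 - x) / r) ^ n ≠ 0)
    (hfix : x = (1 + E * x) ^ n / ((1 + E * x) ^ n + r * (1 + E * (1 - x) / r) ^ n)) :
    E * x * (1 + E * (1 - x) / r) ^ n = E * (1 - x) / r * (1 + E * x) ^ n := by
  rw [eq_div_iff hD] at hfix
  have hr' : r * (E * (1 - x) / r) = E * (1 - x) := mul_div_cancel₀ _ hr
  apply mul_left_cancel₀ hr
  linear_combination E * hfix - (1 + E * x) ^ n * hr'

end OrderedField

/-- The dominant colour class of the ferromagnetic BP fixed point percolates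
supercritically: (e^β - 1)·x > 1/(d-2). -/
theorem dominant_supercritical (q d : ℕ) (hq : 3 ≤ q) (hd : 3 ≤ d)
    (β x : ℝ) (hβ : 0 < β) (hx : x ∈ Set.Ioo (1/(q:ℝ)) 1)
    (hfix : x = (1+(Real.exp β-1)*x)^(d-1) /
      ((1+(Real.exp β-1)*x)^(d-1)
        + ((q:ℝ)-1)*(1+(Real.exp β-1)*(1-x)/((q:ℝ)-1))^(d-1))) :
    1/((d:ℝ)-2) < (Real.exp β - 1)*x := by
  obtain ⟨hqx, hx1⟩ := hx
  obtain ⟨n, rfl⟩ : ∃ n, d = n + 3 := ⟨d - 3, by omega⟩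
  have hq1 : (0 : ℝ) < q - 1 := by
    have : (3 : ℝ) ≤ q := by exact_mod_cast hq
    linarith
  have hx0 : 0 < x := lt_trans (by positivity) hqx
  set E := Real.exp β - 1
  have hE : 0 < E := sub_pos.2 (Real.one_lt_exp_iff.2 hβ)
  have hb : 0 < 1 + E * (1 - x) / (q - 1) := by
    have : 0 < 1 - x := sub_pos.2 hx1
    positivity
  have hba : 1 + E * (1 - x) / (q - 1) < 1 + E * x := by
    rw [div_lt_iff₀ (by positivity)] at hqx
    rw [add_lt_add_iff_left, mul_div_assoc, mul_lt_mul_iff_right₀ hE, div_lt_iff₀ hq1]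
    linarith
  have hfix' := mul_pow_eq_mul_pow_of_eq_div (n + 2) hq1.ne' (by positivity) hfix
  have hsupercrit := one_lt_mul_sub_one_of_sub_one_mul_pow_eq hb hba n
    (by linear_combination hfix')
  push_cast
  rw [div_lt_iff₀ (by linarith), show (n : ℝ) + 3 - 2 = n + 1 by ring]
  linarith
end

section
/- Let q, d ≥ 3, β > 0, and let x ∈ (1/q, 1) satisfy the ferromagnetic BP fixed-point equation. Then (e^β - 1)·(1-x)/(q-1) < 1/(d-2). -/
/-!
Write `A = 1 + (e^β - 1) x` and `B = 1 + (e^β - 1)(1 - x)/(q - 1)` for the two messages, so that the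
claim reads `B - 1 < 1/(d - 2)`. Clearing denominators, the fixed-point equation becomes
`(B - 1) A^(d-1) = (A - 1) B^(d-1)`; in terms of the ratio `t = A/B > 1` this says
`B - 1 = (t - 1)/(t^(d-1) - t)`, and strict Bernoulli, `1 + (d - 1)(t - 1) < t^(d-1)`, bounds the
right-hand side by `1/(d - 2)`.
-/

lemma one_add_mul_sub_one_lt_pow {t : ℝ} (ht : 1 < t) {n : ℕ} (hn : 2 ≤ n) :
    1 + n * (t - 1) < t ^ n := by
  have h := one_add_mul_self_lt_rpow_one_add (s := t - 1) (by linarith) (by linarith)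
    (p := n) (by exact_mod_cast hn)
  rwa [add_sub_cancel, Real.rpow_natCast] at h

lemma sub_one_mul_pow_eq_of_fixed_point {A B c r x : ℝ} {n : ℕ} (hr : r ≠ 0)
    (hA : A - 1 = c * x) (hB : r * (B - 1) = c * (1 - x))
    (hfix : x * (A ^ n + r * B ^ n) = A ^ n) :
    (B - 1) * A ^ n = (A - 1) * B ^ n := by
  apply mul_left_cancel₀ hr
  linear_combination A ^ n * hB - r * B ^ n * hA - c * hfix

lemma sub_one_lt_one_div_of_sub_one_mul_pow_eq {A B : ℝ} {n : ℕ} (hn : 2 ≤ n)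
    (hB : 0 < B) (hBA : B < A) (h : (B - 1) * A ^ n = (A - 1) * B ^ n) :
    B - 1 < 1 / ((n : ℝ) - 1) := by
  set t := A / B
  have ht : 1 < t := (one_lt_div hB).mpr hBA
  have hA : A = t * B := (div_mul_cancel₀ A hB.ne').symm
  have hbal : (B - 1) * (t ^ n - t) = t - 1 := by
    have h' : ((B - 1) * t ^ n) * B ^ n = (t * B - 1) * B ^ n := by
      rw [hA, mul_pow] at h; linear_combination h
    linear_combination mul_right_cancel₀ (pow_ne_zero n hB.ne') h'
  have hbern := one_add_mul_sub_one_lt_pow ht hn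
  have hn1 : (0 : ℝ) < n - 1 := by
    have : (2 : ℝ) ≤ n := by exact_mod_cast hn
    linarith
  have hgap : 0 < t ^ n - t := by nlinarith
  rw [eq_div_of_mul_eq hgap.ne' hbal, div_lt_div_iff₀ hgap hn1]
  linarith

/-- The non-dominant colour classes of the ferromagnetic BP fixed point
percolate subcritically: (e^β - 1)·(1-x)/(q-1) < 1/(d-2). -/
theorem nondominant_subcritical_bp (q d : ℕ) (hq : 3 ≤ q) (hd : 3 ≤ d)
    (β x : ℝ) (hβ : 0 < β) (hx : x ∈ Set.Ioo (1/(q:ℝ)) 1)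
    (hfix : x = (1+(Real.exp β-1)*x)^(d-1) /
      ((1+(Real.exp β-1)*x)^(d-1)
        + ((q:ℝ)-1)*(1+(Real.exp β-1)*(1-x)/((q:ℝ)-1))^(d-1))) :
    (Real.exp β - 1)*(1-x)/((q:ℝ)-1) < 1/((d:ℝ)-2) := by
  obtain ⟨hqx, hx1⟩ := hx
  set c := Real.exp β - 1
  have hc : 0 < c := sub_pos.mpr (Real.one_lt_exp_iff.mpr hβ)
  have hr : (0 : ℝ) < q - 1 := by
    have : (3 : ℝ) ≤ q := by exact_mod_cast hq
    linarith
  set A := 1 + c * x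
  set B := 1 + c * (1 - x) / ((q : ℝ) - 1)
  have hx0 : 0 < x := lt_trans (by positivity) hqx
  have hA : 0 < A := by positivity
  have hB : 0 < B := by have := sub_pos.mpr hx1; positivity
  have hBA : B < A := by
    have hqx' : 1 < q * x := (div_lt_iff₀' (by positivity)).mp hqx
    have : c * (1 - x) / ((q : ℝ) - 1) < c * x := by
      rw [div_lt_iff₀ hr]; nlinarith
    linarith
  have hbal : (B - 1) * A ^ (d - 1) = (A - 1) * B ^ (d - 1) := by
    refine sub_one_mul_pow_eq_of_fixed_point hr.ne' (c := c) (x := x) (by ring)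
      (by simp only [B]; field_simp; ring) ?_
    rwa [eq_div_iff (by positivity)] at hfix
  have hcast : ((d - 1 : ℕ) : ℝ) - 1 = d - 2 := by
    rw [Nat.cast_sub (by omega)]; ring
  simpa [B, hcast] using sub_one_lt_one_div_of_sub_one_mul_pow_eq (by omega) hB hBA hbal
end
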